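/- Let α ∈ (0,1), let u : ℝ^d → ℝ be bounded and continuous, and let ρ be a standard mollifier on ℝ^d. Then there is a constant C = C(d, α, ρ) such that the Hölder seminorm of u is controlled by the mollified gradients: [u]_α ≤ C sup_{τ > 0} τ^{1−α} sup |∇u_τ|, where u_τ = ρ_τ * u. In particular, if the right-hand side is finite then u is α-Hölder continuous. -/
import Mathlib

open MeasureTheory Real Function Convolution

/-- Elliptic mollification: `u_τ(x) = ∫ ρ_τ(x-y) u(y) dy` with `ρ_τ(x) = τ^{-d} ρ(x/τ)`. -/
noncomputable def emoll (d : ℕ) (ρ u : EuclideanSpace ℝ (Fin d) → ℝ) (τ : ℝ)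
    (x : EuclideanSpace ℝ (Fin d)) : ℝ :=
  ∫ y, (τ ^ d)⁻¹ * ρ (τ⁻¹ • (x - y)) * u y

namespace EmollProof

noncomputable def ker (d : ℕ) (ρ : EuclideanSpace ℝ (Fin d) → ℝ) (τ : ℝ)
    (z : EuclideanSpace ℝ (Fin d)) : ℝ := (τ ^ d)⁻¹ * ρ (τ⁻¹ • z)

variable {d : ℕ} {ρ u : EuclideanSpace ℝ (Fin d) → ℝ} {τ : ℝ}

lemma ker_contDiff (hρ : ContDiff ℝ (⊤ : ℕ∞) ρ) : ContDiff ℝ (⊤ : ℕ∞) (ker d ρ τ) :=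
  contDiff_const.mul (hρ.comp (contDiff_const_smul τ⁻¹))

lemma ker_continuous (hρ : ContDiff ℝ (⊤ : ℕ∞) ρ) : Continuous (ker d ρ τ) :=
  (ker_contDiff hρ).continuous

lemma ker_hcs (hcs : HasCompactSupport ρ) (hτ : 0 < τ) : HasCompactSupport (ker d ρ τ) := by
  have h : HasCompactSupport (fun z : EuclideanSpace ℝ (Fin d) => ρ (τ⁻¹ • z)) :=
    hcs.comp_smul (inv_ne_zero hτ.ne')
  exact h.mul_left

lemma ker_integrable (hρ : ContDiff ℝ (⊤ : ℕ∞) ρ) (hcs : HasCompactSupport ρ) (hτ : 0 < τ) :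
    Integrable (ker d ρ τ) :=
  (ker_continuous hρ).integrable_of_hasCompactSupport (ker_hcs hcs hτ)

lemma ker_integral (hτ : 0 < τ) (hρ_int : ∫ x, ρ x = 1) : ∫ z, ker d ρ τ z = 1 := by
  unfold ker
  rw [integral_const_mul, Measure.integral_comp_inv_smul_of_nonneg volume ρ hτ.le,
    finrank_euclideanSpace_fin, smul_eq_mul, hρ_int, mul_one,
    inv_mul_cancel₀ (pow_ne_zero _ hτ.ne')]

lemma ker_abs_integral (hτ : 0 < τ) : (∫ z, |ker d ρ τ z|) = ∫ z, |ρ z| := by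
  have h : ∀ z : EuclideanSpace ℝ (Fin d),
      |ker d ρ τ z| = (τ ^ d)⁻¹ * |ρ (τ⁻¹ • z)| := by
    intro z
    simp only [ker, abs_mul, abs_inv, abs_pow, abs_of_pos hτ]
  have key : (∫ a, |ρ (τ⁻¹ • a)|) = τ ^ d * ∫ z, |ρ z| := by
    simpa [finrank_euclideanSpace_fin] using
      Measure.integral_comp_inv_smul_of_nonneg volume (fun w => |ρ w|) hτ.le
  simp_rw [h]
  rw [integral_const_mul, key, ← mul_assoc,
    inv_mul_cancel₀ (pow_ne_zero _ hτ.ne'), one_mul]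

lemma ker_norm_integral (hτ : 0 < τ) :
    (∫ z, |ker d ρ τ z| * ‖z‖) = τ * ∫ z, |ρ z| * ‖z‖ := by
  have h : ∀ z : EuclideanSpace ℝ (Fin d),
      |ker d ρ τ z| * ‖z‖ = (τ ^ d)⁻¹ * (|ρ (τ⁻¹ • z)| * (τ * ‖τ⁻¹ • z‖)) := by
    intro z
    simp only [ker, abs_mul, abs_inv, abs_pow, abs_of_pos hτ, norm_smul, norm_inv,
      Real.norm_eq_abs, abs_of_pos hτ]
    field_simp
  have key : (∫ a, |ρ (τ⁻¹ • a)| * (τ * ‖τ⁻¹ • a‖))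
      = τ ^ d * ∫ z, |ρ z| * (τ * ‖z‖) := by
    simpa [finrank_euclideanSpace_fin] using
      Measure.integral_comp_inv_smul_of_nonneg volume (fun w => |ρ w| * (τ * ‖w‖)) hτ.le
  simp_rw [h]
  rw [integral_const_mul, key, ← mul_assoc,
    inv_mul_cancel₀ (pow_ne_zero _ hτ.ne'), one_mul]
  simp_rw [← mul_assoc, mul_comm |ρ _| τ, mul_assoc, integral_const_mul]

lemma emoll_eq_conv (u : EuclideanSpace ℝ (Fin d) → ℝ) :
    emoll d ρ u τ = (u ⋆[ContinuousLinearMap.mul ℝ ℝ, volume] ker d ρ τ) := by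
  funext x
  simp only [emoll, convolution_def, ContinuousLinearMap.mul_apply', ker]
  congr 1
  funext y
  ring

lemma emoll_differentiable (hρ : ContDiff ℝ (⊤ : ℕ∞) ρ) (hcs : HasCompactSupport ρ)
    (hu : Continuous u) (hτ : 0 < τ) : Differentiable ℝ (emoll d ρ u τ) := by
  rw [emoll_eq_conv]
  intro x
  exact ((ker_hcs hcs hτ).hasFDerivAt_convolution_right (ContinuousLinearMap.mul ℝ ℝ)
    (hu.locallyIntegrable) ((ker_contDiff hρ).of_le (by simp)) x).differentiableAt

lemma emoll_continuous (hρ : ContDiff ℝ (⊤ : ℕ∞) ρ) (hcs : HasCompactSupport ρ)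
    (hu : Continuous u) (hτ : 0 < τ) : Continuous (emoll d ρ u τ) :=
  (emoll_differentiable hρ hcs hu hτ).continuous

lemma emoll_lip (hρ : ContDiff ℝ (⊤ : ℕ∞) ρ) (hcs : HasCompactSupport ρ)
    (hu : Continuous u) (hτ : 0 < τ) {L : ℝ}
    (hL : ∀ x, ‖fderiv ℝ (emoll d ρ u τ) x‖ ≤ L) :
    ∀ a b, |emoll d ρ u τ a - emoll d ρ u τ b| ≤ L * ‖a - b‖ := by
  intro a b
  have := (convex_univ : Convex ℝ (Set.univ : Set (EuclideanSpace ℝ (Fin d)))).norm_image_sub_le_of_norm_fderiv_le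
    (fun x _ => (emoll_differentiable hρ hcs hu hτ) x) (fun x _ => hL x)
    (Set.mem_univ b) (Set.mem_univ a)
  simpa [Real.norm_eq_abs] using this

lemma emoll_eq_integral_sub (g : EuclideanSpace ℝ (Fin d) → ℝ)
    (x : EuclideanSpace ℝ (Fin d)) :
    emoll d ρ g τ x = ∫ z, ker d ρ τ z * g (x - z) := by
  rw [← integral_sub_left_eq_self (fun y => ker d ρ τ y * g (x - y)) volume x]
  simp only [sub_sub_cancel]
  rfl

lemma emoll_sub_self (hρ : ContDiff ℝ (⊤ : ℕ∞) ρ) (hcs : HasCompactSupport ρ)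
    (hρ_int : ∫ x, ρ x = 1) {g : EuclideanSpace ℝ (Fin d) → ℝ} (hg : Continuous g)
    (hτ : 0 < τ) (x : EuclideanSpace ℝ (Fin d)) :
    emoll d ρ g τ x - g x = ∫ z, ker d ρ τ z * (g (x - z) - g x) := by
  have hint1 : Integrable (fun z => ker d ρ τ z * g (x - z)) := by
    apply Continuous.integrable_of_hasCompactSupport
    · exact (ker_continuous hρ).mul (hg.comp (continuous_const.sub continuous_id))
    · exact (ker_hcs hcs hτ).mul_right
  have hint2 : Integrable (fun z => ker d ρ τ z * g x) :=
    (ker_integrable hρ hcs hτ).mul_const _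
  calc emoll d ρ g τ x - g x
      = (∫ z, ker d ρ τ z * g (x - z)) - (∫ z, ker d ρ τ z) * g x := by
        rw [emoll_eq_integral_sub, ker_integral hτ hρ_int, one_mul]
    _ = (∫ z, ker d ρ τ z * g (x - z)) - ∫ z, ker d ρ τ z * g x := by
        rw [integral_mul_const]
    _ = ∫ z, (ker d ρ τ z * g (x - z) - ker d ρ τ z * g x) := (integral_sub hint1 hint2).symm
    _ = ∫ z, ker d ρ τ z * (g (x - z) - g x) := by simp_rw [mul_sub]

lemma emoll_dist_lip (hρ : ContDiff ℝ (⊤ : ℕ∞) ρ) (hcs : HasCompactSupport ρ)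
    (hρ_int : ∫ x, ρ x = 1) {g : EuclideanSpace ℝ (Fin d) → ℝ} (hg : Continuous g)
    {L : ℝ} (hL0 : 0 ≤ L) (hgl : ∀ a b, |g a - g b| ≤ L * ‖a - b‖)
    (hτ : 0 < τ) (x : EuclideanSpace ℝ (Fin d)) :
    |emoll d ρ g τ x - g x| ≤ L * τ * ∫ z, |ρ z| * ‖z‖ := by
  rw [emoll_sub_self hρ hcs hρ_int hg hτ x]
  have hint1 : Integrable (fun z => |ker d ρ τ z| * |g (x - z) - g x|) := by
    simp_rw [← abs_mul]
    apply Integrable.abs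
    apply Continuous.integrable_of_hasCompactSupport
    · exact (ker_continuous hρ).mul
        ((hg.comp (continuous_const.sub continuous_id)).sub continuous_const)
    · exact (ker_hcs hcs hτ).mul_right
  have hint2 : Integrable (fun z => |ker d ρ τ z| * (L * ‖z‖)) := by
    have : Integrable (fun z : EuclideanSpace ℝ (Fin d) => |ker d ρ τ z| * ‖z‖) := by
      apply Continuous.integrable_of_hasCompactSupport
      · exact (ker_continuous hρ).abs.mul continuous_norm
      · exact (ker_hcs hcs hτ).abs.mul_right
    have := this.const_mul L
    simpa [mul_assoc, mul_left_comm] using this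
  calc |∫ z, ker d ρ τ z * (g (x - z) - g x)|
      ≤ ∫ z, |ker d ρ τ z| * |g (x - z) - g x| := by
        simpa [Real.norm_eq_abs, abs_mul] using
          norm_integral_le_integral_norm (fun z => ker d ρ τ z * (g (x - z) - g x))
    _ ≤ ∫ z, |ker d ρ τ z| * (L * ‖z‖) := by
        apply integral_mono hint1 hint2
        intro z
        apply mul_le_mul_of_nonneg_left _ (abs_nonneg _)
        have := hgl (x - z) x
        simpa using this
    _ = L * (τ * ∫ z, |ρ z| * ‖z‖) := by
        simp_rw [mul_left_comm _ L, integral_const_mul, ker_norm_integral hτ]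
    _ = L * τ * ∫ z, |ρ z| * ‖z‖ := by ring

lemma emoll_comm (hρ : ContDiff ℝ (⊤ : ℕ∞) ρ) (hcs : HasCompactSupport ρ)
    (hu : Continuous u) {σ t : ℝ} (hσ : 0 < σ) (ht : 0 < t) :
    emoll d ρ (emoll d ρ u σ) t = emoll d ρ (emoll d ρ u t) σ := by
  have hloc := hu.locallyIntegrable (μ := (volume : Measure (EuclideanSpace ℝ (Fin d))))
  have kmeas : ∀ τ' : ℝ, AEStronglyMeasurable (ker d ρ τ')
      (volume : Measure (EuclideanSpace ℝ (Fin d))) :=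
    fun τ' => (ker_continuous hρ).aestronglyMeasurable
  have assoc : ∀ (σ' t' : ℝ), 0 < σ' → 0 < t' → ∀ x,
      ((u ⋆[ContinuousLinearMap.mul ℝ ℝ, volume] ker d ρ σ')
        ⋆[ContinuousLinearMap.mul ℝ ℝ, volume] ker d ρ t') x
      = (u ⋆[ContinuousLinearMap.mul ℝ ℝ, volume]
          (ker d ρ σ' ⋆[ContinuousLinearMap.mul ℝ ℝ, volume] ker d ρ t')) x := by
    intro σ' t' hσ' ht' x
    apply convolution_assoc
    · intro a b c; exact mul_assoc a b c
    · exact hu.aestronglyMeasurable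
    · exact kmeas σ'
    · exact kmeas t'
    · exact Filter.Eventually.of_forall
        ((ker_hcs hcs hσ').convolutionExists_right (ContinuousLinearMap.mul ℝ ℝ) hloc
          (ker_continuous hρ))
    · refine Filter.Eventually.of_forall ?_
      exact (ker_hcs hcs ht').norm.convolutionExists_right (ContinuousLinearMap.mul ℝ ℝ)
        ((ker_continuous hρ).norm.locallyIntegrable) (ker_continuous hρ).norm
    · have hc : HasCompactSupport ((fun x => ‖ker d ρ σ' x‖)
          ⋆[ContinuousLinearMap.mul ℝ ℝ, volume] fun x => ‖ker d ρ t' x‖) :=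
        (ker_hcs hcs hσ').norm.convolution _ (ker_hcs hcs ht').norm
      have hcont : Continuous ((fun x => ‖ker d ρ σ' x‖)
          ⋆[ContinuousLinearMap.mul ℝ ℝ, volume] fun x => ‖ker d ρ t' x‖) :=
        (ker_hcs hcs ht').norm.continuous_convolution_right _
          ((ker_continuous hρ).norm.locallyIntegrable) (ker_continuous hρ).norm
      exact hc.convolutionExists_right (ContinuousLinearMap.mul ℝ ℝ)
        (hu.norm.locallyIntegrable) hcont x
  have kcomm : (ker d ρ σ ⋆[ContinuousLinearMap.mul ℝ ℝ, volume] ker d ρ t)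
      = (ker d ρ t ⋆[ContinuousLinearMap.mul ℝ ℝ, volume] ker d ρ σ) := by
    funext x
    rw [convolution_mul_swap]
    simp only [convolution_def, ContinuousLinearMap.mul_apply']
    simp_rw [mul_comm]
  rw [emoll_eq_conv (emoll d ρ u σ), emoll_eq_conv (emoll d ρ u t),
    emoll_eq_conv u, emoll_eq_conv u]
  funext x
  rw [assoc σ t hσ ht x, assoc t σ ht hσ x, kcomm]

lemma emoll_dist_small (hρ : ContDiff ℝ (⊤ : ℕ∞) ρ) (hcs : HasCompactSupport ρ)
    (hρ_int : ∫ x, ρ x = 1) (hu : Continuous u)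
    {R : ℝ} (hR : tsupport ρ ⊆ Metric.closedBall 0 R)
    {ε δ : ℝ} (hε : 0 ≤ ε) (x : EuclideanSpace ℝ (Fin d))
    (hδ : ∀ z : EuclideanSpace ℝ (Fin d), ‖z‖ ≤ δ → |u (x - z) - u x| ≤ ε)
    (hτ : 0 < τ) (hτδ : τ * R ≤ δ) :
    |emoll d ρ u τ x - u x| ≤ (∫ z, |ρ z|) * ε := by
  rw [emoll_sub_self hρ hcs hρ_int hu hτ x]
  have hint1 : Integrable (fun z => |ker d ρ τ z| * |u (x - z) - u x|) := by
    simp_rw [← abs_mul]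
    apply Integrable.abs
    apply Continuous.integrable_of_hasCompactSupport
    · exact (ker_continuous hρ).mul
        ((hu.comp (continuous_const.sub continuous_id)).sub continuous_const)
    · exact (ker_hcs hcs hτ).mul_right
  have hint2 : Integrable (fun z => |ker d ρ τ z| * ε) :=
    ((ker_integrable hρ hcs hτ).abs).mul_const _
  calc |∫ z, ker d ρ τ z * (u (x - z) - u x)|
      ≤ ∫ z, |ker d ρ τ z| * |u (x - z) - u x| := by
        simpa [Real.norm_eq_abs, abs_mul] using
          norm_integral_le_integral_norm (fun z => ker d ρ τ z * (u (x - z) - u x))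
    _ ≤ ∫ z, |ker d ρ τ z| * ε := by
        apply integral_mono hint1 hint2
        intro z
        by_cases hz : ker d ρ τ z = 0
        · simp [hz]
        · apply mul_le_mul_of_nonneg_left _ (abs_nonneg _)
          apply hδ
          have hzsupp : τ⁻¹ • z ∈ tsupport ρ := by
            apply subset_tsupport
            intro h0
            apply hz
            simp [ker, h0]
          have := hR hzsupp
          rw [Metric.mem_closedBall, dist_zero_right, norm_smul, norm_inv,
            Real.norm_eq_abs, abs_of_pos hτ] at this
          have h1 : ‖z‖ ≤ τ * R := by
            rw [inv_mul_le_iff₀ hτ] at this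
            linarith [this]
          linarith
    _ = (∫ z, |ker d ρ τ z|) * ε := by rw [integral_mul_const]
    _ = (∫ z, |ρ z|) * ε := by rw [ker_abs_integral hτ]

lemma emoll_tendsto (hρ : ContDiff ℝ (⊤ : ℕ∞) ρ) (hcs : HasCompactSupport ρ)
    (hρ_int : ∫ x, ρ x = 1) (hu : Continuous u) (x : EuclideanSpace ℝ (Fin d))
    (hτ : 0 < τ) :
    Filter.Tendsto (fun n : ℕ => emoll d ρ u (τ * (2 : ℝ)⁻¹ ^ n) x)
      Filter.atTop (nhds (u x)) := by
  obtain ⟨R, hR0, hR⟩ : ∃ R > 0, tsupport ρ ⊆ Metric.closedBall 0 R := by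
    obtain ⟨R, hR⟩ := hcs.isCompact.isBounded.subset_closedBall 0
    exact ⟨max R 1, lt_of_lt_of_le one_pos (le_max_right _ _),
      hR.trans (Metric.closedBall_subset_closedBall (le_max_left _ _))⟩
  set Iρ : ℝ := ∫ z, |ρ z| with hIρ
  have hIρ0 : 0 ≤ Iρ := integral_nonneg fun z => abs_nonneg _
  rw [Metric.tendsto_atTop]
  intro ε hε
  set ε' : ℝ := ε / (2 * (Iρ + 1)) with hε'
  have hε'0 : 0 < ε' := by positivity
  -- continuity of u at x gives δ
  obtain ⟨δ, hδ0, hδ⟩ : ∃ δ > 0, ∀ z : EuclideanSpace ℝ (Fin d), ‖z‖ ≤ δ →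
      |u (x - z) - u x| ≤ ε' := by
    obtain ⟨δ, hδ0, hδ⟩ := Metric.continuousAt_iff.1 (hu.continuousAt (x := x)) ε' hε'0
    refine ⟨δ / 2, by positivity, fun z hz => ?_⟩
    have : dist (x - z) x < δ := by
      rw [dist_eq_norm]
      simp only [sub_sub_cancel_left, norm_neg]
      linarith
    have := hδ this
    rw [Real.dist_eq] at this
    exact this.le
  -- choose N
  obtain ⟨N, hN⟩ : ∃ N : ℕ, τ * (2 : ℝ)⁻¹ ^ N * R ≤ δ := by
    have h2 : Filter.Tendsto (fun n : ℕ => τ * (2 : ℝ)⁻¹ ^ n * R) Filter.atTop (nhds 0) := by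
      have := tendsto_pow_atTop_nhds_zero_of_lt_one (by norm_num : (0:ℝ) ≤ 2⁻¹)
        (by norm_num : (2:ℝ)⁻¹ < 1)
      have := (this.const_mul τ).mul_const R
      simpa using this
    have := (h2.eventually (eventually_le_nhds hδ0)).exists
    obtain ⟨N, hN⟩ := this
    exact ⟨N, by simpa using hN⟩
  refine ⟨N, fun n hn => ?_⟩
  have hτn : 0 < τ * (2 : ℝ)⁻¹ ^ n := by positivity
  have hmono : τ * (2 : ℝ)⁻¹ ^ n * R ≤ δ := by
    have : (2 : ℝ)⁻¹ ^ n ≤ (2 : ℝ)⁻¹ ^ N :=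
      pow_le_pow_of_le_one (by norm_num) (by norm_num) hn
    have h1 : τ * (2 : ℝ)⁻¹ ^ n * R ≤ τ * (2 : ℝ)⁻¹ ^ N * R := by
      apply mul_le_mul_of_nonneg_right _ hR0.le
      exact mul_le_mul_of_nonneg_left this hτ.le
    linarith
  have key := emoll_dist_small hρ hcs hρ_int hu hR hε'0.le x hδ hτn hmono
  rw [Real.dist_eq]
  calc |emoll d ρ u (τ * (2 : ℝ)⁻¹ ^ n) x - u x| ≤ Iρ * ε' := key
    _ < ε := by
        rw [hε']
        rw [div_eq_inv_mul, ← mul_assoc]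
        have h1 : Iρ * (2 * (Iρ + 1))⁻¹ < 1 := by
          rw [mul_inv_lt_iff₀ (by positivity)]
          nlinarith
        nlinarith

end EmollProof

open EmollProof

/-- For bounded continuous `u`, the Hölder seminorm is controlled by the mollified
gradients: `[u]_α ≤ C sup_{τ>0} τ^{1-α} sup |∇u_τ|` with `C = C(d,α,ρ)`. -/
theorem stmt5 (d : ℕ) (α : ℝ) (hα : α ∈ Set.Ioo (0 : ℝ) 1)
    (ρ : EuclideanSpace ℝ (Fin d) → ℝ)
    (hρ_smooth : ContDiff ℝ (⊤ : ℕ∞) ρ) (hρ_cpt : HasCompactSupport ρ)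
    (hρ_int : ∫ x, ρ x = 1) :
    ∃ C > 0, ∀ u : EuclideanSpace ℝ (Fin d) → ℝ, Continuous u →
      (∃ M, ∀ x, |u x| ≤ M) →
      ∀ K : ℝ, (∀ τ > 0, ∀ x, τ ^ ((1 : ℝ) - α) * ‖fderiv ℝ (emoll d ρ u τ) x‖ ≤ K) →
      ∀ x y, |u x - u y| ≤ C * K * ‖x - y‖ ^ α := by
  obtain ⟨hα0, hα1⟩ := hα
  set I₁ : ℝ := ∫ z, |ρ z| * ‖z‖ with hI₁def
  have hI₁0 : 0 ≤ I₁ := integral_nonneg fun z => mul_nonneg (abs_nonneg _) (norm_nonneg _)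
  set r : ℝ := (2 : ℝ)⁻¹ ^ α with hrdef
  have hr0 : 0 < r := Real.rpow_pos_of_pos (by norm_num) _
  have hr1 : r < 1 := Real.rpow_lt_one (by norm_num) (by norm_num) hα0
  set C : ℝ := 6 * (I₁ + 1) / (1 - r) + 1 with hCdef
  have hC0 : 0 < C := by
    rw [hCdef]
    have : 0 < 6 * (I₁ + 1) / (1 - r) := by
      apply div_pos (by linarith) (by linarith)
    linarith
  refine ⟨C, hC0, ?_⟩
  intro u hu _hubdd K hK
  -- K is nonnegative
  have hK0 : 0 ≤ K := by
    have := hK 1 one_pos 0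
    rw [Real.one_rpow, one_mul] at this
    exact le_trans (norm_nonneg _) this
  -- Lipschitz bound for each mollification
  have lip : ∀ τ : ℝ, 0 < τ → ∀ a b,
      |emoll d ρ u τ a - emoll d ρ u τ b| ≤ (K * τ ^ (α - 1)) * ‖a - b‖ := by
    intro τ hτ
    apply emoll_lip hρ_smooth hρ_cpt hu hτ
    intro x
    have h1 := hK τ hτ x
    have h2 : (0:ℝ) < τ ^ ((1:ℝ) - α) := Real.rpow_pos_of_pos hτ _
    have h3 : ‖fderiv ℝ (emoll d ρ u τ) x‖ ≤ K / τ ^ ((1:ℝ) - α) := by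
      rw [le_div_iff₀ h2]
      linarith [h1]
    have h4 : K / τ ^ ((1:ℝ) - α) = K * τ ^ (α - 1) := by
      rw [div_eq_mul_inv, ← Real.rpow_neg hτ.le]
      norm_num
    rwa [h4] at h3
  have hlipnn : ∀ τ : ℝ, 0 < τ → 0 ≤ K * τ ^ (α - 1) :=
    fun τ hτ => mul_nonneg hK0 (Real.rpow_nonneg hτ.le _)
  -- the dyadic step estimate
  have step : ∀ σ : ℝ, 0 < σ → ∀ z,
      |emoll d ρ u σ z - emoll d ρ u (σ / 2) z| ≤ 3 * (I₁ + 1) * K * σ ^ α := by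
    intro σ hσ z
    have hσ2 : (0:ℝ) < σ / 2 := by positivity
    have hg₁c : Continuous (emoll d ρ u σ) := emoll_continuous hρ_smooth hρ_cpt hu hσ
    have hg₂c : Continuous (emoll d ρ u (σ / 2)) := emoll_continuous hρ_smooth hρ_cpt hu hσ2
    have hA := emoll_dist_lip hρ_smooth hρ_cpt hρ_int hg₁c (hlipnn σ hσ) (lip σ hσ) hσ2 z
    have hB := emoll_dist_lip hρ_smooth hρ_cpt hρ_int hg₂c (hlipnn _ hσ2) (lip _ hσ2) hσ z
    have hcomm : emoll d ρ (emoll d ρ u σ) (σ / 2) z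
        = emoll d ρ (emoll d ρ u (σ / 2)) σ z :=
      congrFun (emoll_comm hρ_smooth hρ_cpt hu hσ hσ2) z
    rw [← hI₁def] at hA hB
    have hA' : |emoll d ρ u σ z - emoll d ρ (emoll d ρ u (σ / 2)) σ z|
        ≤ K * σ ^ (α - 1) * (σ / 2) * I₁ := by
      rw [← hcomm, abs_sub_comm]
      exact hA
    have tri : |emoll d ρ u σ z - emoll d ρ u (σ / 2) z|
        ≤ K * σ ^ (α - 1) * (σ / 2) * I₁ + K * (σ / 2) ^ (α - 1) * σ * I₁ := by
      calc |emoll d ρ u σ z - emoll d ρ u (σ / 2) z|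
          ≤ |emoll d ρ u σ z - emoll d ρ (emoll d ρ u (σ / 2)) σ z|
            + |emoll d ρ (emoll d ρ u (σ / 2)) σ z - emoll d ρ u (σ / 2) z| :=
            abs_sub_le _ _ _
        _ ≤ K * σ ^ (α - 1) * (σ / 2) * I₁ + K * (σ / 2) ^ (α - 1) * σ * I₁ :=
            add_le_add hA' hB
    -- arithmetic
    have e1 : σ ^ (α - 1) * σ = σ ^ α := by
      rw [← Real.rpow_add_one hσ.ne' (α - 1)]
      norm_num
    have e2 : (σ / 2) ^ (α - 1) ≤ 2 * σ ^ (α - 1) := by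
      rw [Real.div_rpow hσ.le (by norm_num : (0:ℝ) ≤ 2)]
      have h2 : (1:ℝ) / 2 ≤ (2:ℝ) ^ (α - 1) := by
        have : (2:ℝ) ^ (-1:ℝ) ≤ (2:ℝ) ^ (α - 1) :=
          Real.rpow_le_rpow_of_exponent_le (by norm_num) (by linarith)
        rwa [Real.rpow_neg_one, show ((2:ℝ)⁻¹) = 1/2 by norm_num] at this
      have h2pos : (0:ℝ) < (2:ℝ) ^ (α - 1) := Real.rpow_pos_of_pos (by norm_num) _
      rw [div_le_iff₀ h2pos]
      have hσα : (0:ℝ) ≤ σ ^ (α - 1) := Real.rpow_nonneg hσ.le _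
      nlinarith
    have hσα : (0:ℝ) ≤ σ ^ α := Real.rpow_nonneg hσ.le _
    have t1 : K * σ ^ (α - 1) * (σ / 2) * I₁ = K * I₁ * σ ^ α / 2 := by
      rw [← e1]; ring
    have t2 : K * (σ / 2) ^ (α - 1) * σ * I₁ ≤ 2 * (K * I₁ * σ ^ α) := by
      have h := mul_le_mul_of_nonneg_right (mul_le_mul_of_nonneg_left e2 hK0)
        (mul_nonneg hσ.le hI₁0)
      calc K * (σ / 2) ^ (α - 1) * σ * I₁
          = K * (σ / 2) ^ (α - 1) * (σ * I₁) := by ring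
        _ ≤ K * (2 * σ ^ (α - 1)) * (σ * I₁) := h
        _ = 2 * (K * I₁ * (σ ^ (α - 1) * σ)) := by ring
        _ = 2 * (K * I₁ * σ ^ α) := by rw [e1]
    have p1 : (0:ℝ) ≤ K * I₁ * σ ^ α := by positivity
    have p2 : (0:ℝ) ≤ K * σ ^ α := by positivity
    have expand : 3 * (I₁ + 1) * K * σ ^ α = 3 * (K * I₁ * σ ^ α) + 3 * (K * σ ^ α) := by
      ring
    linarith
  -- telescoping bound
  have tele : ∀ τ : ℝ, 0 < τ → ∀ z, ∀ n : ℕ,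
      |emoll d ρ u τ z - emoll d ρ u (τ * (2:ℝ)⁻¹ ^ n) z|
        ≤ 3 * (I₁ + 1) * K * τ ^ α / (1 - r) := by
    intro τ hτ z n
    set S : ℕ → ℝ := fun k => emoll d ρ u (τ * (2:ℝ)⁻¹ ^ k) z with hSdef
    have hS0 : S 0 = emoll d ρ u τ z := by simp [hSdef]
    have hstepk : ∀ k : ℕ, |S k - S (k + 1)| ≤ 3 * (I₁ + 1) * K * τ ^ α * r ^ k := by
      intro k
      have hσk : (0:ℝ) < τ * (2:ℝ)⁻¹ ^ k := by positivity
      have hhalf : τ * (2:ℝ)⁻¹ ^ (k + 1) = (τ * (2:ℝ)⁻¹ ^ k) / 2 := by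
        rw [pow_succ]; ring
      have := step (τ * (2:ℝ)⁻¹ ^ k) hσk z
      rw [← hhalf] at this
      have hpow : (τ * (2:ℝ)⁻¹ ^ k) ^ α = τ ^ α * r ^ k := by
        rw [Real.mul_rpow hτ.le (by positivity)]
        congr 1
        rw [← Real.rpow_natCast (2:ℝ)⁻¹ k, ← Real.rpow_mul (by norm_num), mul_comm,
          Real.rpow_mul (by norm_num), Real.rpow_natCast]
      calc |S k - S (k + 1)| ≤ 3 * (I₁ + 1) * K * (τ * (2:ℝ)⁻¹ ^ k) ^ α := this
        _ = 3 * (I₁ + 1) * K * τ ^ α * r ^ k := by rw [hpow]; ring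
    have hsum : |S 0 - S n| ≤ ∑ k ∈ Finset.range n, |S k - S (k + 1)| := by
      have := Finset.sum_range_sub' S n
      rw [← this]
      exact Finset.abs_sum_le_sum_abs _ _
    have hgeom : ∑ k ∈ Finset.range n, r ^ k ≤ 1 / (1 - r) := by
      have h1 : ∑ k ∈ Finset.range n, r ^ k = (1 - r ^ n) / (1 - r) := by
        rw [geom_sum_eq hr1.ne n]
        rw [div_eq_div_iff (by linarith) (by linarith)]
        ring
      rw [h1]
      apply div_le_div_of_nonneg_right _ (by linarith)
      · have : (0:ℝ) ≤ r ^ n := pow_nonneg hr0.le n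
        linarith
    have hτα : (0:ℝ) ≤ τ ^ α := Real.rpow_nonneg hτ.le _
    calc |emoll d ρ u τ z - emoll d ρ u (τ * (2:ℝ)⁻¹ ^ n) z| = |S 0 - S n| := by rw [hS0]
      _ ≤ ∑ k ∈ Finset.range n, |S k - S (k + 1)| := hsum
      _ ≤ ∑ k ∈ Finset.range n, 3 * (I₁ + 1) * K * τ ^ α * r ^ k :=
          Finset.sum_le_sum fun k _ => hstepk k
      _ = 3 * (I₁ + 1) * K * τ ^ α * ∑ k ∈ Finset.range n, r ^ k := by
          rw [Finset.mul_sum]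
      _ ≤ 3 * (I₁ + 1) * K * τ ^ α * (1 / (1 - r)) := by
          apply mul_le_mul_of_nonneg_left hgeom (by positivity)
      _ = 3 * (I₁ + 1) * K * τ ^ α / (1 - r) := by ring
  -- distance from u to its mollification
  have distu : ∀ τ : ℝ, 0 < τ → ∀ z,
      |u z - emoll d ρ u τ z| ≤ 3 * (I₁ + 1) * K * τ ^ α / (1 - r) := by
    intro τ hτ z
    have hT := emoll_tendsto hρ_smooth hρ_cpt hρ_int hu z hτ
    have hT2 : Filter.Tendsto
        (fun n : ℕ => |emoll d ρ u τ z - emoll d ρ u (τ * (2:ℝ)⁻¹ ^ n) z|)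
        Filter.atTop (nhds |emoll d ρ u τ z - u z|) :=
      (Filter.Tendsto.sub tendsto_const_nhds hT).abs
    have hle := le_of_tendsto hT2 (Filter.Eventually.of_forall fun n => tele τ hτ z n)
    rwa [abs_sub_comm] at hle
  -- main estimate
  intro x y
  by_cases hxy : x = y
  · subst hxy
    simp only [sub_self, abs_zero, norm_zero]
    rw [Real.zero_rpow hα0.ne']
    simp
  · have hτ : (0:ℝ) < ‖x - y‖ := by
      rw [norm_pos_iff]
      exact sub_ne_zero.mpr hxy
    have h1 := distu ‖x - y‖ hτ x
    have h2 := distu ‖x - y‖ hτ y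
    have h2' : |emoll d ρ u ‖x - y‖ y - u y| ≤ 3 * (I₁ + 1) * K * ‖x - y‖ ^ α / (1 - r) := by
      rw [abs_sub_comm]; exact h2
    have h3 := lip ‖x - y‖ hτ x y
    have hmul : K * ‖x - y‖ ^ (α - 1) * ‖x - y‖ = K * ‖x - y‖ ^ α := by
      rw [mul_assoc, ← Real.rpow_add_one hτ.ne' (α - 1)]
      norm_num
    have h1r : (1:ℝ) - r ≠ 0 := by linarith
    calc |u x - u y|
        ≤ |u x - emoll d ρ u ‖x - y‖ x| + |emoll d ρ u ‖x - y‖ x - emoll d ρ u ‖x - y‖ y|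
          + |emoll d ρ u ‖x - y‖ y - u y| := by
          calc |u x - u y| ≤ |u x - emoll d ρ u ‖x - y‖ y| + |emoll d ρ u ‖x - y‖ y - u y| :=
              abs_sub_le _ _ _
            _ ≤ (|u x - emoll d ρ u ‖x - y‖ x|
                + |emoll d ρ u ‖x - y‖ x - emoll d ρ u ‖x - y‖ y|)
                + |emoll d ρ u ‖x - y‖ y - u y| := by
                gcongr
                exact abs_sub_le _ _ _
      _ ≤ 3 * (I₁ + 1) * K * ‖x - y‖ ^ α / (1 - r) + K * ‖x - y‖ ^ (α - 1) * ‖x - y‖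
          + 3 * (I₁ + 1) * K * ‖x - y‖ ^ α / (1 - r) :=
          add_le_add (add_le_add h1 h3) h2'
      _ = 3 * (I₁ + 1) * K * ‖x - y‖ ^ α / (1 - r) + K * ‖x - y‖ ^ α
          + 3 * (I₁ + 1) * K * ‖x - y‖ ^ α / (1 - r) := by rw [hmul]
      _ = C * K * ‖x - y‖ ^ α := by
          rw [hCdef]
          field_simp
          ring
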